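/- arXiv:2605.30807 — 2 statements merged into one kernel-verified Lean document; each statement's English description precedes it below -/
import Mathlib

section
/- Let E_1, ..., E_m, E_{m+1} be exchangeable real-valued random variables that are almost surely distinct. Define q to be the ⌈(m+1)(1-α)⌉-th smallest value among E_1,...,E_m. Then P(E_{m+1} ≤ q) ≤ 1 - α + 1/(m+1). -/
/-!
With no ties, exactly `k` of the indices `0, …, m` have rank `< k` among `E 0, …, E m`, and by
exchangeability each index does so with the same probability, which is therefore `k / (m + 1)`.
The event `E m ≤ q` says precisely that fewer than `k` of the first `m` values lie below `E m`,
i.e. that `E m` has rank `< k`; finally `k = ⌈(m + 1)(1 - α)⌉ < (m + 1)(1 - α) + 1`.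
-/

open Finset MeasureTheory

section Order

variable {α : Type*} [LinearOrder α]

theorem List.Pairwise.countP_lt_le_of_le_getElem {l : List α} (hl : l.Pairwise (· ≤ ·))
    {j : ℕ} (hj : j < l.length) {x : α} (hx : x ≤ l[j]) : l.countP (· < x) ≤ j := by
  have hdrop : (l.drop j).countP (· < x) = 0 := by
    refine List.countP_eq_zero.2 fun _ hy => ?_
    obtain ⟨i, hi, rfl⟩ := List.mem_drop_iff_getElem.1 hy
    simpa using hx.trans (hl.rel_get_of_le (a := ⟨j, hj⟩) (b := ⟨j + i, by omega⟩)
      (by simp [Fin.le_def]))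
  rw [← l.take_append_drop j, List.countP_append, hdrop, add_zero]
  exact List.countP_le_length.trans (List.length_take_le _ _)

theorem List.Pairwise.lt_countP_lt_of_getElem_lt {l : List α} (hl : l.Pairwise (· ≤ ·))
    {j : ℕ} (hj : j < l.length) {x : α} (hx : l[j] < x) : j < l.countP (· < x) := by
  have htake : (l.take (j + 1)).countP (· < x) = j + 1 := by
    rw [List.countP_eq_length.2, List.length_take_of_le hj]
    rintro _ hy
    obtain ⟨i, hi, rfl⟩ := List.mem_take_iff_getElem.1 hy
    simpa using lt_of_le_of_lt (hl.rel_get_of_le (a := ⟨i, by omega⟩) (b := ⟨j, hj⟩)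
      (by simp [Fin.le_def]; omega)) hx
  have := (l.take_sublist (j + 1)).countP_le (p := (· < x))
  omega

theorem List.Pairwise.le_getElem_iff_countP_lt_le {l : List α} (hl : l.Pairwise (· ≤ ·))
    {j : ℕ} (hj : j < l.length) (x : α) : x ≤ l[j] ↔ l.countP (· < x) ≤ j :=
  ⟨hl.countP_lt_le_of_le_getElem hj, fun h => not_lt.1 fun hx =>
    (hl.lt_countP_lt_of_getElem_lt hj hx).not_ge h⟩

theorem Multiset.le_sort_getD_iff_countP_lt_le (s : Multiset α) {j : ℕ} (hj : j < s.card)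
    (x d : α) : x ≤ (s.sort (· ≤ ·)).getD j d ↔ s.countP (· < x) ≤ j := by
  have hj' : j < (s.sort (· ≤ ·)).length := by rwa [Multiset.length_sort]
  conv_rhs => rw [← s.sort_eq (· ≤ ·), Multiset.coe_countP]
  rw [List.getD_eq_getElem?_getD, List.getElem?_eq_getElem hj', Option.getD_some]
  exact (s.pairwise_sort _).le_getElem_iff_countP_lt_le hj' x

variable {ι : Type*} [Fintype ι]

def rank (v : ι → α) (j : ι) : ℕ := #{i | v i < v j}

theorem rank_lt_card (v : ι → α) (j : ι) : rank v j < Fintype.card ι :=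
  card_lt_univ_of_notMem (x := j) (by simp)

theorem rank_lt_rank {v : ι → α} {i j : ι} (h : v i < v j) : rank v i < rank v j :=
  card_lt_card ⟨fun _ hl => by simp only [mem_filter, mem_univ, true_and] at hl ⊢; exact hl.trans h,
    fun hsub => by simpa using hsub (show i ∈ ({l | v l < v j} : Finset ι) by simpa using h)⟩

theorem rank_injective {v : ι → α} (hv : Function.Injective v) : Function.Injective (rank v) := by
  intro i j hij
  rcases lt_trichotomy (v i) (v j) with h | h | h
  · exact absurd hij (rank_lt_rank h).ne
  · exact hv h
  · exact absurd hij (rank_lt_rank h).ne'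

theorem image_rank {v : ι → α} (hv : Function.Injective v) :
    univ.image (rank v) = range (Fintype.card ι) :=
  eq_of_subset_of_card_le
    (fun _ h => by obtain ⟨j, -, rfl⟩ := mem_image.1 h; simpa using rank_lt_card v j)
    (by rw [card_range, card_image_of_injective _ (rank_injective hv), card_univ])

theorem card_rank_lt {v : ι → α} (hv : Function.Injective v) {k : ℕ} (hk : k ≤ Fintype.card ι) :
    #{j | rank v j < k} = k := by
  have hrange : {n ∈ range (Fintype.card ι) | n < k} = range k := by ext; simp; omega
  rw [← card_image_of_injective _ (rank_injective hv), ← filter_image (p := (· < k)),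
    image_rank hv, hrange, card_range]

theorem rank_comp_perm (v : ι → α) (σ : Equiv.Perm ι) (j : ι) :
    rank (v ∘ σ) j = rank v (σ j) := by
  simp only [rank, Function.comp_apply]
  exact card_equiv σ (by simp)

theorem rank_last {m : ℕ} (v : Fin (m + 1) → α) :
    rank v (Fin.last m) = #{i : Fin m | v i.castSucc < v (Fin.last m)} := by
  simp only [rank, card_filter, Fin.sum_univ_castSucc, lt_irrefl, if_false, add_zero]

end Order

section Exchangeable

variable {Ω ι β : Type*} [MeasurableSpace Ω] [MeasurableSpace β]

def Exchangeable (μ : Measure Ω) (E : ι → Ω → β) : Prop :=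
  ∀ σ : Equiv.Perm ι, μ.map (fun ω i => E (σ i) ω) = μ.map (fun ω i => E i ω)

theorem Exchangeable.measure_preimage_perm [Countable ι] {μ : Measure Ω} {E : ι → Ω → β}
    (hexch : Exchangeable μ E) (hE : ∀ i, Measurable (E i)) (σ : Equiv.Perm ι)
    {S : Set (ι → β)} (hS : MeasurableSet S) :
    μ {ω | (fun i => E (σ i) ω) ∈ S} = μ {ω | (fun i => E i ω) ∈ S} := by
  have h := congrArg (· S) (hexch σ)
  rwa [Measure.map_apply (by fun_prop) hS, Measure.map_apply (by fun_prop) hS] at h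

end Exchangeable

section RankMeasure

variable {Ω ι α : Type*} [MeasurableSpace Ω] [Fintype ι] [LinearOrder α] [TopologicalSpace α]
  [OrderClosedTopology α] [MeasurableSpace α] [OpensMeasurableSpace α] [SecondCountableTopology α]
  {μ : Measure Ω} {E : ι → Ω → α}

theorem measurableSet_rank_lt (j : ι) (k : ℕ) : MeasurableSet {v : ι → α | rank v j < k} := by
  have hrank : Measurable fun v : ι → α => rank v j := by
    simp only [rank, card_filter]
    exact Finset.measurable_sum _ fun i _ =>
      Measurable.ite (measurableSet_lt (measurable_pi_apply i) (measurable_pi_apply j))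
        measurable_const measurable_const
  exact hrank measurableSet_Iio

theorem Exchangeable.measure_rank_lt_eq (hexch : Exchangeable μ E) (hE : ∀ i, Measurable (E i))
    (k : ℕ) (i j : ι) : μ {ω | rank (E · ω) i < k} = μ {ω | rank (E · ω) j < k} := by
  classical
  have h := hexch.measure_preimage_perm hE (Equiv.swap i j) (measurableSet_rank_lt j k)
  simp only [Set.mem_ofPred_eq] at h
  rw [← h]
  congr! 3 with ω
  rw [← Function.comp_def (E · ω) (Equiv.swap i j), rank_comp_perm, Equiv.swap_apply_right]

theorem sum_measure_rank_lt [IsProbabilityMeasure μ] (hE : ∀ i, Measurable (E i))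
    (hdistinct : ∀ᵐ ω ∂μ, Function.Injective (E · ω)) {k : ℕ} (hk : k ≤ Fintype.card ι) :
    ∑ j, μ {ω | rank (E · ω) j < k} = k := by
  have hmeas (j : ι) : MeasurableSet {ω | rank (E · ω) j < k} :=
    measurableSet_rank_lt (α := α) j k |>.preimage (by fun_prop)
  calc ∑ j, μ {ω | rank (E · ω) j < k}
      = ∫⁻ ω, ∑ j, {ω | rank (E · ω) j < k}.indicator 1 ω ∂μ := by
        rw [lintegral_finsetSum _ fun j _ => measurable_one.indicator (hmeas j)]
        simp_rw [lintegral_indicator_one (hmeas _)]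
    _ = ∫⁻ _, (k : ENNReal) ∂μ := by
        refine lintegral_congr_ae (hdistinct.mono fun ω hω => ?_)
        simp_rw [Set.indicator_apply, Pi.one_apply, Set.mem_ofPred_eq]
        have hcard := card_rank_lt hω hk
        rw [card_filter] at hcard
        exact_mod_cast hcard
    _ = k := by simp

theorem Exchangeable.measure_rank_lt [IsProbabilityMeasure μ] (hexch : Exchangeable μ E)
    (hE : ∀ i, Measurable (E i)) (hdistinct : ∀ᵐ ω ∂μ, Function.Injective (E · ω))
    {k : ℕ} (hk : k ≤ Fintype.card ι) (j : ι) :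
    μ {ω | rank (E · ω) j < k} = k / Fintype.card ι := by
  have hsum := sum_measure_rank_lt hE hdistinct hk
  rw [sum_congr rfl fun i _ => hexch.measure_rank_lt_eq hE k i j, sum_const, card_univ,
    nsmul_eq_mul] at hsum
  have : Nonempty ι := ⟨j⟩
  rwa [ENNReal.eq_div_iff (by simp) (by simp)]

end RankMeasure

theorem conformal_coverage_upper_bound_general
    {Ω : Type*} [MeasurableSpace Ω] (μ : Measure Ω) [IsProbabilityMeasure μ]
    (m : ℕ) (α : ℝ) (hα1 : α < 1)
    (E : Fin (m + 1) → Ω → ℝ) (hE : ∀ i, Measurable (E i))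
    (hdistinct : ∀ᵐ ω ∂μ, Function.Injective (fun i => E i ω))
    (hexch : ∀ σ : Equiv.Perm (Fin (m + 1)),
      Measure.map (fun ω => fun i => E (σ i) ω) μ
        = Measure.map (fun ω => fun i => E i ω) μ)
    (k : ℕ) (hk : k = ⌈((m : ℝ) + 1) * (1 - α)⌉₊) (hkm : k ≤ m)
    (q : Ω → ℝ)
    (hq : ∀ ω, q ω =
      ((((Finset.univ : Finset (Fin m)).val.map
          (fun i => E (Fin.castSucc i) ω)).sort (· ≤ ·)).getD (k - 1) 0)) :
    (μ {ω | E (Fin.last m) ω ≤ q ω}).toReal ≤ 1 - α + 1 / ((m : ℝ) + 1) := by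
  have hk_pos : 0 < k := by rw [hk, Nat.ceil_pos]; nlinarith
  have hevent : {ω | E (Fin.last m) ω ≤ q ω} = {ω | rank (E · ω) (Fin.last m) < k} := by
    ext ω
    rw [Set.mem_ofPred_eq, Set.mem_ofPred_eq, hq,
      Multiset.le_sort_getD_iff_countP_lt_le _ (by simp; omega), Multiset.countP_map, rank_last]
    exact Nat.le_sub_one_iff_lt hk_pos
  have hceil : (k : ℝ) ≤ ((m : ℝ) + 1) * (1 - α) + 1 :=
    (hk ▸ Nat.ceil_lt_add_one (by nlinarith)).le
  rw [hevent, Exchangeable.measure_rank_lt hexch hE hdistinct (by simp; omega),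
    Fintype.card_fin, ENNReal.toReal_div, ENNReal.toReal_natCast, ENNReal.toReal_natCast,
    Nat.cast_succ]
  calc (k : ℝ) / ((m : ℝ) + 1) ≤ (((m : ℝ) + 1) * (1 - α) + 1) / ((m : ℝ) + 1) := by gcongr
    _ = 1 - α + 1 / ((m : ℝ) + 1) := by field_simp

/-- Split-conformal quantile lemma (upper bound): if `E 0, ..., E m` are
exchangeable real-valued random variables and `q` is the `⌈(m+1)(1-α)⌉`-th
smallest value among the first `m` of them, and the `E i` are a.s. distinct,
then `P(E m ≤ q) ≤ 1 - α + 1/(m+1)`. -/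
theorem conformal_coverage_upper_bound
    {Ω : Type*} [MeasurableSpace Ω] (μ : Measure Ω) [IsProbabilityMeasure μ]
    (m : ℕ) (hm : 0 < m) (α : ℝ) (hα : 0 < α) (hα1 : α < 1)
    (E : Fin (m + 1) → Ω → ℝ) (hE : ∀ i, Measurable (E i))
    (hdistinct : ∀ᵐ ω ∂μ, Function.Injective (fun i => E i ω))
    (hexch : ∀ σ : Equiv.Perm (Fin (m + 1)),
      Measure.map (fun ω => fun i => E (σ i) ω) μ
        = Measure.map (fun ω => fun i => E i ω) μ)
    (k : ℕ) (hk : k = ⌈((m : ℝ) + 1) * (1 - α)⌉₊) (hkm : k ≤ m)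
    (q : Ω → ℝ)
    (hq : ∀ ω, q ω =
      ((((Finset.univ : Finset (Fin m)).val.map
          (fun i => E (Fin.castSucc i) ω)).sort (· ≤ ·)).getD (k - 1) 0)) :
    (μ {ω | E (Fin.last m) ω ≤ q ω}).toReal ≤ 1 - α + 1 / ((m : ℝ) + 1) :=
  conformal_coverage_upper_bound_general μ m α hα1 E hE hdistinct hexch k hk hkm q hq
end

section
/- Let K ⊆ ℝ^r be a nonempty closed convex set, γ ≥ 0, S = { z : dist(z, K) ≤ γ }, and y ∈ ℝ^r with y ∉ S. Let y* be the (unique) metric projection of y onto K. Then the point p = y* + γ·(y - y*)/‖y - y*‖₂ is the unique metric projection of y onto S, i.e. p ∈ S and ‖y - p‖₂ = dist(y, S) = ‖y - y*‖₂ - γ. -/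
/-!
By the 1-Lipschitz bound `infDist y K ≤ infDist z K + dist y z`, every point of `S` is at
distance at least `infDist y K - γ` from `y`, and the point at distance `γ` from `y*` on the
segment `[y*, y]` attains this bound. For uniqueness, a nearest point `a ∈ K` of a minimiser `q`
is at distance at most `infDist y K` from `y`, so `a = y*` by strict convexity; then `q` attains
equality in the triangle inequality for `y, q, y*`, which in a strictly convex space fixes its
position on the segment.
-/

open Metric AffineMap

section PseudoMetricSpace

variable {α : Type*} [PseudoMetricSpace α] {K : Set α} {y z : α} {γ : ℝ}

lemma infDist_sub_le_dist_of_infDist_le (hz : infDist z K ≤ γ) :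
    infDist y K - γ ≤ dist y z := by
  linarith [infDist_le_infDist_add_dist (x := y) (y := z) (s := K), dist_comm y z]

end PseudoMetricSpace

section NormedSpace

variable {E : Type*} [NormedAddCommGroup E] [NormedSpace ℝ E] {K : Set E} {x y ystar : E}
  {γ : ℝ}

lemma dist_lineMap_div_dist_left (hγ : 0 ≤ γ) (hγd : γ ≤ dist x y) :
    dist (lineMap x y (γ / dist x y)) x = γ := by
  rcases (hγ.trans hγd).eq_or_lt with hd | hd
  · obtain rfl : x = y := dist_eq_zero.1 hd.symm
    obtain rfl : γ = 0 := le_antisymm (by simpa using hγd) hγ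
    simp
  · rw [dist_lineMap_left, Real.norm_of_nonneg (by positivity), div_mul_cancel₀ _ hd.ne']

lemma dist_lineMap_div_dist_right (hγ : 0 ≤ γ) (hγd : γ ≤ dist x y) :
    dist (lineMap x y (γ / dist x y)) y = dist x y - γ := by
  rcases (hγ.trans hγd).eq_or_lt with hd | hd
  · obtain rfl : x = y := dist_eq_zero.1 hd.symm
    obtain rfl : γ = 0 := le_antisymm (by simpa using hγd) hγ
    simp
  · rw [dist_lineMap_right, Real.norm_of_nonneg (sub_nonneg.2 ((div_le_one hd).2 hγd)),
      sub_mul, one_mul, div_mul_cancel₀ _ hd.ne']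

lemma lineMap_mem_setOf_infDist_le (hstar : ystar ∈ K) (hproj : dist y ystar = infDist y K)
    (hγ : 0 ≤ γ) (hγK : γ ≤ infDist y K) :
    lineMap ystar y (γ / dist ystar y) ∈ {z | infDist z K ≤ γ} :=
  (infDist_le_dist_of_mem hstar).trans
    (dist_lineMap_div_dist_left hγ (by rwa [dist_comm, hproj])).le

lemma dist_lineMap_of_dist_eq_infDist (hproj : dist y ystar = infDist y K) (hγ : 0 ≤ γ)
    (hγK : γ ≤ infDist y K) :
    dist y (lineMap ystar y (γ / dist ystar y)) = infDist y K - γ := by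
  rw [dist_comm, dist_lineMap_div_dist_right hγ (by rwa [dist_comm, hproj]), dist_comm, hproj]

lemma infDist_setOf_infDist_le (hstar : ystar ∈ K) (hproj : dist y ystar = infDist y K)
    (hγ : 0 ≤ γ) (hγK : γ ≤ infDist y K) :
    infDist y {z | infDist z K ≤ γ} = infDist y K - γ := by
  have hp := lineMap_mem_setOf_infDist_le hstar hproj hγ hγK
  refine le_antisymm ?_
    ((le_infDist ⟨_, hp⟩).2 fun z hz => infDist_sub_le_dist_of_infDist_le hz)
  exact (infDist_le_dist_of_mem hp).trans_eq (dist_lineMap_of_dist_eq_infDist hproj hγ hγK)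

end NormedSpace

section StrictConvexSpace

variable {E : Type*} [NormedAddCommGroup E] [NormedSpace ℝ E] [StrictConvexSpace ℝ E]
  {K : Set E} {y ystar q a b : E} {γ : ℝ}

lemma Convex.eq_of_dist_eq_infDist (hK : Convex ℝ K) (ha : a ∈ K) (hb : b ∈ K)
    (hya : dist y a = infDist y K) (hyb : dist y b = infDist y K) : a = b := by
  by_contra hab
  have hm : midpoint ℝ a b ∈ K := hK.segment_subset ha hb (midpoint_mem_segment a b)
  have hlt := (sbtw_midpoint_of_ne ℝ hab).dist_lt_max_dist y
  rw [dist_comm a, dist_comm b, hya, hyb, max_self, dist_comm] at hlt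
  exact (infDist_le_dist_of_mem hm).not_gt hlt

lemma eq_lineMap_of_infDist_le_of_dist_eq [ProperSpace E] (hcl : IsClosed K)
    (hconv : Convex ℝ K) (hstar : ystar ∈ K) (hproj : dist y ystar = infDist y K)
    (hγK : γ < infDist y K) (hq : infDist q K ≤ γ) (hqd : dist y q = infDist y K - γ) :
    q = lineMap ystar y (γ / dist ystar y) := by
  obtain ⟨a, haK, hqa⟩ := hcl.exists_infDist_eq_dist ⟨ystar, hstar⟩ q
  have hya : dist y a = infDist y K :=
    le_antisymm (by linarith [dist_triangle y q a]) (infDist_le_dist_of_mem haK)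
  obtain rfl : a = ystar := hconv.eq_of_dist_eq_infDist haK hstar hya hproj
  have hqa' : dist q a = γ := by linarith [dist_triangle y q a]
  have hd : dist a y ≠ 0 := by
    rw [dist_comm, hproj]
    linarith [infDist_nonneg (x := q) (s := K)]
  apply eq_lineMap_of_dist_eq_mul_of_dist_eq_mul
  · rw [div_mul_cancel₀ _ hd, dist_comm, hqa']
  · rw [sub_mul, one_mul, div_mul_cancel₀ _ hd, dist_comm q, hqd, dist_comm, hproj]

end StrictConvexSpace

theorem projection_onto_inflated_set_general
    (r : ℕ) (K : Set (EuclideanSpace ℝ (Fin r)))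
    (hcl : IsClosed K) (hconv : Convex ℝ K) (γ : ℝ) (hγ : 0 ≤ γ)
    (y ystar : EuclideanSpace ℝ (Fin r))
    (hy : y ∉ {z : EuclideanSpace ℝ (Fin r) | Metric.infDist z K ≤ γ})
    (hstar : ystar ∈ K) (hproj : dist y ystar = Metric.infDist y K) :
    (ystar + (γ / ‖y - ystar‖) • (y - ystar))
        ∈ {z : EuclideanSpace ℝ (Fin r) | Metric.infDist z K ≤ γ} ∧
    dist y (ystar + (γ / ‖y - ystar‖) • (y - ystar))
        = Metric.infDist y {z : EuclideanSpace ℝ (Fin r) | Metric.infDist z K ≤ γ} ∧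
    Metric.infDist y {z : EuclideanSpace ℝ (Fin r) | Metric.infDist z K ≤ γ}
        = ‖y - ystar‖ - γ ∧
    ∀ q ∈ {z : EuclideanSpace ℝ (Fin r) | Metric.infDist z K ≤ γ},
      dist y q = Metric.infDist y {z : EuclideanSpace ℝ (Fin r) | Metric.infDist z K ≤ γ} →
        q = ystar + (γ / ‖y - ystar‖) • (y - ystar) := by
  have hγK : γ < infDist y K := not_le.1 hy
  have hp :
      ystar + (γ / ‖y - ystar‖) • (y - ystar) = lineMap ystar y (γ / dist ystar y) := by
    rw [lineMap_apply_module', dist_eq_norm', add_comm]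
  have hnorm : ‖y - ystar‖ = infDist y K := by rw [← dist_eq_norm, hproj]
  rw [hp, infDist_setOf_infDist_le hstar hproj hγ hγK.le, hnorm]
  exact ⟨lineMap_mem_setOf_infDist_le hstar hproj hγ hγK.le,
    dist_lineMap_of_dist_eq_infDist hproj hγ hγK.le, rfl,
    fun q hq hqd => eq_lineMap_of_infDist_le_of_dist_eq hcl hconv hstar hproj hγK hq hqd⟩

/-- Projection onto the inflated set `S = { z | dist(z, K) ≤ γ }` of a point
`y ∉ S`: if `y*` is the metric projection of `y` onto the nonempty closed
convex set `K`, then `p = y* + γ (y - y*)/‖y - y*‖` is the unique metric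
projection of `y` onto `S`, with `dist(y, S) = ‖y - y*‖ - γ`. -/
theorem projection_onto_inflated_set
    (r : ℕ) (K : Set (EuclideanSpace ℝ (Fin r))) (hne : K.Nonempty)
    (hcl : IsClosed K) (hconv : Convex ℝ K) (γ : ℝ) (hγ : 0 ≤ γ)
    (y ystar : EuclideanSpace ℝ (Fin r))
    (hy : y ∉ {z : EuclideanSpace ℝ (Fin r) | Metric.infDist z K ≤ γ})
    (hstar : ystar ∈ K) (hproj : dist y ystar = Metric.infDist y K) :
    (ystar + (γ / ‖y - ystar‖) • (y - ystar))
        ∈ {z : EuclideanSpace ℝ (Fin r) | Metric.infDist z K ≤ γ} ∧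
    dist y (ystar + (γ / ‖y - ystar‖) • (y - ystar))
        = Metric.infDist y {z : EuclideanSpace ℝ (Fin r) | Metric.infDist z K ≤ γ} ∧
    Metric.infDist y {z : EuclideanSpace ℝ (Fin r) | Metric.infDist z K ≤ γ}
        = ‖y - ystar‖ - γ ∧
    ∀ q ∈ {z : EuclideanSpace ℝ (Fin r) | Metric.infDist z K ≤ γ},
      dist y q = Metric.infDist y {z : EuclideanSpace ℝ (Fin r) | Metric.infDist z K ≤ γ} →
        q = ystar + (γ / ‖y - ystar‖) • (y - ystar) :=
  projection_onto_inflated_set_general r K hcl hconv γ hγ y ystar hy hstar hproj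
end
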